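/- arXiv:2603.19740 — 2 statements merged into one kernel-verified Lean document; each statement's English description precedes it below -/
import Mathlib

section
/- Let Ω ⊂ ℝ^N (N ≥ 3) be an open convex set, let u ∈ C²(Ω), and suppose there exists a strictly increasing function U ∈ C²(I), defined on an open interval I containing u(Ω), such that the composition x ↦ U(u(x)) is convex on Ω. Then for every x ∈ Ω, writing H := D²u(x) for the Hessian matrix of u at x, g := ∇u(x) for the gradient, and s := tr(H), the following inequality holds: (1/3)‖g‖²·[2·tr((s·I − H)·H²) − 2·S₂(H)·s] ≤ 2⟨(s·I − H)·H g, H g⟩ − 2·S₂(H)·⟨H g, g⟩. -/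
open Matrix

/-- `S₂(M) := (1/2)[(tr M)² − tr(M²)]`. -/
noncomputable def S2 {n : ℕ} (M : Matrix (Fin n) (Fin n) ℝ) : ℝ :=
  (1 / 2) * (M.trace ^ 2 - (M * M).trace)

/-- The Hessian matrix `D²u(x)` of `u` at `x`. -/
noncomputable def hessianMatrix {n : ℕ} (u : EuclideanSpace ℝ (Fin n) → ℝ)
    (x : EuclideanSpace ℝ (Fin n)) : Matrix (Fin n) (Fin n) ℝ :=
  fun i j => iteratedFDeriv ℝ 2 u x ![EuclideanSpace.single i 1, EuclideanSpace.single j 1]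

/-- The gradient `∇u(x)` of `u` at `x`, as a vector in `ℝ^n`. -/
noncomputable def gradVec {n : ℕ} (u : EuclideanSpace ℝ (Fin n) → ℝ)
    (x : EuclideanSpace ℝ (Fin n)) : Fin n → ℝ :=
  fun i => gradient u x i

/-
At `x`, the Hessian `H` of `u` is nonnegative on `g⊥`, `g = ∇u(x)`: otherwise `u` restricted to
the line through `x` in a direction `v ⊥ g` with `D²u(x)(v, v) < 0` has a strict local maximum
at `x`, hence so has the convex function `U ∘ u` (as `U` is strictly increasing), which is
impossible. Hence the compression `M = P H P` of `H` to `g⊥` is positive semidefinite, so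
`6 e₃(M) = (tr M)³ − 3 tr M tr M² + 2 tr M³ ≥ 0`. Expanding the traces of powers of `M` in terms of
`H` and `g` shows that `‖g‖² / 3 · 6 e₃(M)` is the right-hand side minus the left-hand side.
-/

open Filter Topology Set
open scoped Pointwise

theorem Finset.cube_sum_sub_three_mul_sum_mul_sum_sq_add_two_mul_sum_cube_nonneg {ι R : Type*}
    [CommRing R] [LinearOrder R] [IsStrictOrderedRing R] (s : Finset ι) {μ : ι → R}
    (hμ : ∀ i ∈ s, 0 ≤ μ i) :
    0 ≤ (∑ i ∈ s, μ i) ^ 3 - 3 * (∑ i ∈ s, μ i) * (∑ i ∈ s, μ i ^ 2) + 2 * ∑ i ∈ s, μ i ^ 3 := by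
  classical
  induction s using Finset.induction_on with
  | empty => simp
  | insert a s ha ih =>
    have hs : ∀ i ∈ s, 0 ≤ μ i := fun i hi => hμ i (Finset.mem_insert_of_mem hi)
    have hμa : 0 ≤ μ a := hμ a (Finset.mem_insert_self a s)
    have hsum : 0 ≤ ∑ i ∈ s, μ i := Finset.sum_nonneg hs
    have hsq := Finset.sum_sq_le_sq_sum_of_nonneg hs
    simp only [Finset.sum_insert ha]
    nlinarith [ih hs]

namespace Matrix

variable {n : Type*} [Fintype n]

theorem vecMulVec_mulVec_eq_dotProduct_smul {R : Type*} [CommSemiring R] (a b c : n → R) :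
    vecMulVec a b *ᵥ c = (b ⬝ᵥ c) • a := by
  rw [vecMulVec_mulVec, op_smul_eq_smul]

/-- `6 e₃` of the eigenvalues of `A`, written through Newton's identities as `p₁³ − 3 p₁ p₂ + 2 p₃`
in the power sums `pₖ = tr Aᵏ`. -/
noncomputable def sixESymm3 (A : Matrix n n ℝ) : ℝ :=
  A.trace ^ 3 - 3 * A.trace * (A * A).trace + 2 * (A * A * A).trace

variable [DecidableEq n]

theorem IsHermitian.trace_pow_eq_sum_eigenvalues_pow {A : Matrix n n ℝ}
    (hA : A.IsHermitian) (k : ℕ) : (A ^ k).trace = ∑ i, hA.eigenvalues i ^ k := by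
  conv_lhs => rw [hA.spectral_theorem, ← map_pow, Unitary.conjStarAlgAut_apply, trace_mul_cycle,
    Unitary.coe_star_mul_self, one_mul, diagonal_pow, trace_diagonal]
  rfl

theorem PosSemidef.sixESymm3_nonneg {A : Matrix n n ℝ} (hA : A.PosSemidef) : 0 ≤ sixESymm3 A := by
  have hk := hA.1.trace_pow_eq_sum_eigenvalues_pow
  have h1 : A.trace = ∑ i, hA.1.eigenvalues i := by simpa using hk 1
  rw [sixESymm3, h1, ← sq, hk 2, ← pow_succ, hk 3]
  exact Finset.univ.cube_sum_sub_three_mul_sum_mul_sum_sq_add_two_mul_sum_cube_nonneg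
    fun i _ => hA.eigenvalues_nonneg i

/-- The orthogonal projection onto `g⊥` (the identity when `g = 0`, since `0⁻¹ = 0`). -/
noncomputable def projPerp (g : n → ℝ) : Matrix n n ℝ :=
  1 - (g ⬝ᵥ g)⁻¹ • vecMulVec g g

theorem dotProduct_projPerp_mulVec (g v : n → ℝ) : g ⬝ᵥ (projPerp g *ᵥ v) = 0 := by
  by_cases hg : g = 0
  · simp [hg]
  have hgg : g ⬝ᵥ g ≠ 0 := by simpa using hg
  rw [projPerp, sub_mulVec, one_mulVec, smul_mulVec, vecMulVec_mulVec_eq_dotProduct_smul,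
    dotProduct_sub, dotProduct_smul, dotProduct_smul, smul_eq_mul, smul_eq_mul]
  field_simp
  ring

theorem projPerp_transpose (g : n → ℝ) : (projPerp g)ᵀ = projPerp g := by
  rw [projPerp, transpose_sub, transpose_one, transpose_smul, transpose_vecMulVec]

theorem posSemidef_projPerp_mul_mul_projPerp {H : Matrix n n ℝ} (hH : H.IsHermitian) {g : n → ℝ}
    (hpos : ∀ v, g ⬝ᵥ v = 0 → 0 ≤ v ⬝ᵥ (H *ᵥ v)) :
    (projPerp g * H * projPerp g).PosSemidef := by
  have hP : (projPerp g)ᴴ = projPerp g := by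
    rw [conjTranspose_eq_transpose_of_trivial, projPerp_transpose]
  refine posSemidef_iff_dotProduct_mulVec.mpr ⟨?_, fun v => ?_⟩
  · simpa only [hP] using isHermitian_conjTranspose_mul_mul (projPerp g) hH
  · have hvP : v ᵥ* projPerp g = projPerp g *ᵥ v := by
      simpa only [projPerp_transpose] using vecMul_transpose (projPerp g) v
    rw [star_trivial, ← mulVec_mulVec, ← mulVec_mulVec, dotProduct_mulVec, hvP]
    exact hpos _ (dotProduct_projPerp_mulVec g v)

theorem sixESymm3_projPerp_mul_mul_projPerp {n : ℕ} {H : Matrix (Fin n) (Fin n) ℝ}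
    (hH : H.IsHermitian) (g : Fin n → ℝ) :
    (g ⬝ᵥ g) / 3 * sixESymm3 (projPerp g * H * projPerp g) =
      (2 * (((H.trace • (1 : Matrix (Fin n) (Fin n) ℝ) - H) *ᵥ (H *ᵥ g)) ⬝ᵥ (H *ᵥ g))
          - 2 * S2 H * ((H *ᵥ g) ⬝ᵥ g))
        - 1 / 3 * (g ⬝ᵥ g) * (2 * ((H.trace • (1 : Matrix (Fin n) (Fin n) ℝ) - H) * (H * H)).trace
          - 2 * S2 H * H.trace) := by
  by_cases hg : g = 0
  · simp [hg]
  have hgg : g ⬝ᵥ g ≠ 0 := by simpa using hg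
  have hHt : Hᵀ = H := (conjTranspose_eq_transpose_of_trivial H).symm.trans hH
  have hvecMul : ∀ a, a ᵥ* H = H *ᵥ a := fun a => by rw [← vecMul_transpose, hHt]
  have hdot : ∀ a b, (H *ᵥ a) ⬝ᵥ b = a ⬝ᵥ (H *ᵥ b) := fun a b => by
    rw [dotProduct_mulVec, hvecMul, dotProduct_comm]
  -- every product of `H` and `vecMulVec g g` collapses to some `vecMulVec (Hᵏ g) g`, so all
  -- traces become moments `g ⬝ᵥ Hᵏ g`
  simp only [sixESymm3, S2, projPerp, sub_mul, mul_sub, Matrix.one_mul, Matrix.mul_one,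
    smul_mul_assoc, mul_smul_comm, Matrix.mul_assoc, mul_vecMulVec, vecMulVec_mul, trace_sub,
    trace_smul, trace_vecMulVec, smul_vecMulVec, hvecMul, sub_mulVec, smul_mulVec, one_mulVec,
    sub_dotProduct, smul_dotProduct, smul_eq_mul, hdot, ← mulVec_mulVec,
    vecMulVec_mulVec_eq_dotProduct_smul]
  field_simp
  ring

end Matrix

theorem trace_inequality_of_nonneg_on_orthogonal {n : ℕ} {H : Matrix (Fin n) (Fin n) ℝ}
    (hH : H.IsHermitian) {g : Fin n → ℝ} (hpos : ∀ v, g ⬝ᵥ v = 0 → 0 ≤ v ⬝ᵥ (H *ᵥ v)) :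
    1 / 3 * (g ⬝ᵥ g) *
        (2 * ((H.trace • (1 : Matrix (Fin n) (Fin n) ℝ) - H) * (H * H)).trace
          - 2 * S2 H * H.trace)
      ≤ 2 * (((H.trace • (1 : Matrix (Fin n) (Fin n) ℝ) - H) *ᵥ (H *ᵥ g)) ⬝ᵥ (H *ᵥ g))
          - 2 * S2 H * ((H *ᵥ g) ⬝ᵥ g) := by
  have hcompr := (posSemidef_projPerp_mul_mul_projPerp hH hpos).sixESymm3_nonneg
  have hg : 0 ≤ g ⬝ᵥ g / 3 := by
    have := dotProduct_star_self_nonneg g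
    rw [star_trivial] at this
    positivity
  linarith [sixESymm3_projPerp_mul_mul_projPerp hH g, mul_nonneg hg hcompr]

theorem eventually_lt_of_hasDerivAt_deriv_neg {f f' : ℝ → ℝ} {a b : ℝ}
    (hf : ∀ᶠ t in 𝓝 a, HasDerivAt f (f' t) t) (hf'a : f' a = 0) (hf' : HasDerivAt f' b a)
    (hb : b < 0) : ∀ᶠ t in 𝓝[≠] a, f t < f a := by
  have hsign : ∀ᶠ t in 𝓝[≠] a, f' t * (t - a) < 0 := by
    filter_upwards [(hasDerivAt_iff_tendsto_slope.mp hf').eventually (gt_mem_nhds hb),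
      self_mem_nhdsWithin] with t hslope hta
    rw [slope_def_field, hf'a, sub_zero] at hslope
    have hsq : 0 < (t - a) ^ 2 := sq_pos_iff.mpr (sub_ne_zero.mpr hta)
    have := mul_neg_of_neg_of_pos hslope hsq
    rwa [sq, ← mul_assoc, div_mul_cancel₀ _ (sub_ne_zero.mpr hta)] at this
  obtain ⟨ε, hε, hball⟩ :=
    Metric.eventually_nhds_iff.mp (hf.and (eventually_nhdsWithin_iff.mp hsign))
  filter_upwards [eventually_nhdsWithin_of_eventually_nhds (Metric.ball_mem_nhds a hε),
    self_mem_nhdsWithin] with t ht hta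
  have hnear : ∀ s ∈ uIcc a t, HasDerivAt f (f' s) s ∧ (s ≠ a → f' s * (s - a) < 0) :=
    fun s hs => hball <| (Real.dist_le_of_mem_uIcc hs left_mem_uIcc).trans_lt
      (by rwa [dist_comm] at ht)
  have hcont : ContinuousOn f (uIcc a t) := fun s hs =>
    (hnear s hs).1.continuousAt.continuousWithinAt
  rcases lt_or_gt_of_ne hta with hlt | hgt
  · obtain ⟨c, hc, hfc⟩ := exists_hasDerivAt_eq_slope f f' hlt (hcont.mono Icc_subset_uIcc')
      fun s hs => (hnear s (Icc_subset_uIcc' (Ioo_subset_Icc_self hs))).1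
    have hc_sign := (hnear c (Icc_subset_uIcc' (Ioo_subset_Icc_self hc))).2 hc.2.ne
    have hfc_pos : 0 < f' c := by nlinarith [hc.2]
    rw [eq_div_iff (sub_pos.mpr hlt).ne'] at hfc
    nlinarith
  · obtain ⟨c, hc, hfc⟩ := exists_hasDerivAt_eq_slope f f' hgt (hcont.mono Icc_subset_uIcc)
      fun s hs => (hnear s (Icc_subset_uIcc (Ioo_subset_Icc_self hs))).1
    have hc_sign := (hnear c (Icc_subset_uIcc (Ioo_subset_Icc_self hc))).2 hc.1.ne'
    have hfc_neg : f' c < 0 := by nlinarith [hc.1]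
    rw [eq_div_iff (sub_pos.mpr hgt).ne'] at hfc
    nlinarith

section Line

variable {E : Type*} [NormedAddCommGroup E] [NormedSpace ℝ E]

theorem tendsto_add_smul_nhds_zero (x v : E) :
    Tendsto (fun t : ℝ => x + t • v) (𝓝 0) (𝓝 x) := by
  have hcont : Continuous fun t : ℝ => x + t • v := by fun_prop
  simpa using hcont.tendsto 0

theorem ConvexOn.not_eventually_lt_along_line {s : Set E} {F : E → ℝ} (hF : ConvexOn ℝ s F)
    {x : E} (hs : s ∈ 𝓝 x) (v : E) : ¬∀ᶠ t in 𝓝[≠] (0 : ℝ), F (x + t • v) < F x := by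
  intro hlt
  have hmem : ∀ᶠ t in 𝓝[≠] (0 : ℝ), x + t • v ∈ s ∧ F (x + t • v) < F x :=
    (eventually_nhdsWithin_of_eventually_nhds ((tendsto_add_smul_nhds_zero x v).eventually hs)).and
      hlt
  have hneg : Tendsto (fun t : ℝ => -t) (𝓝[≠] 0) (𝓝[≠] 0) := by
    conv_rhs => rw [← neg_zero, ← neg_nhdsNE]
    exact tendsto_map
  obtain ⟨t, ⟨hs₁, hlt₁⟩, hs₂, hlt₂⟩ := (hmem.and (hneg.eventually hmem)).exists
  have hmid := hF.2 hs₁ hs₂ (by norm_num : (0 : ℝ) ≤ 1 / 2) (by norm_num : (0 : ℝ) ≤ 1 / 2)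
    (by norm_num)
  rw [show (1 / 2 : ℝ) • (x + t • v) + (1 / 2 : ℝ) • (x + -t • v) = x by module] at hmid
  simp only [smul_eq_mul] at hmid
  linarith

theorem eventually_lt_along_line_of_fderiv_eq_zero {u : E → ℝ} {x v : E}
    (hu : ContDiffAt ℝ 2 u x) (hv : fderiv ℝ u x v = 0)
    (hneg : fderiv ℝ (fderiv ℝ u) x v v < 0) :
    ∀ᶠ t in 𝓝[≠] (0 : ℝ), u (x + t • v) < u x := by
  have hline : ∀ t : ℝ, HasDerivAt (fun t : ℝ => x + t • v) v t := fun t => by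
    simpa using ((hasDerivAt_id t).smul_const v).const_add x
  have hderiv : ∀ᶠ t in 𝓝 (0 : ℝ),
      HasDerivAt (fun t => u (x + t • v)) (fderiv ℝ u (x + t • v) v) t := by
    filter_upwards [(tendsto_add_smul_nhds_zero x v).eventually (hu.eventually (by simp))]
      with t (ht : ContDiffAt ℝ 2 u (x + t • v))
    exact (ht.differentiableAt (by simp)).hasFDerivAt.comp_hasDerivAt t (hline t)
  have hderiv2 : HasDerivAt (fun t : ℝ => fderiv ℝ u (x + t • v) v)
      (fderiv ℝ (fderiv ℝ u) x v v) 0 := by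
    have hfd : HasFDerivAt (fderiv ℝ u) (fderiv ℝ (fderiv ℝ u) x) (x + (0 : ℝ) • v) := by
      simpa using ((hu.fderiv_right (m := 1) le_rfl).differentiableAt one_ne_zero).hasFDerivAt
    have hcomp : HasDerivAt (fun t : ℝ => fderiv ℝ u (x + t • v)) (fderiv ℝ (fderiv ℝ u) x v) 0 :=
      hfd.comp_hasDerivAt 0 (hline 0)
    simpa using hcomp.clm_apply (hasDerivAt_const 0 v)
  simpa using eventually_lt_of_hasDerivAt_deriv_neg hderiv (by simpa using hv) hderiv2 hneg

theorem fderiv_fderiv_apply_self_nonneg_of_convexOn_comp {Ω : Set E} {I : Set ℝ} {u : E → ℝ}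
    {U : ℝ → ℝ} {x v : E} (hΩ : Ω ∈ 𝓝 x) (hu : ContDiffAt ℝ 2 u x) (huI : MapsTo u Ω I)
    (hU : StrictMonoOn U I) (hconv : ConvexOn ℝ Ω (fun y => U (u y)))
    (hv : fderiv ℝ u x v = 0) : 0 ≤ fderiv ℝ (fderiv ℝ u) x v v := by
  by_contra! hneg
  apply hconv.not_eventually_lt_along_line hΩ v
  filter_upwards [eventually_lt_along_line_of_fderiv_eq_zero hu hv hneg,
    eventually_nhdsWithin_of_eventually_nhds ((tendsto_add_smul_nhds_zero x v).eventually hΩ)]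
    with t hlt hmem
  exact hU (huI hmem) (huI (mem_of_mem_nhds hΩ)) hlt

end Line

section Euclidean

variable {n : ℕ} (u : EuclideanSpace ℝ (Fin n) → ℝ) (x : EuclideanSpace ℝ (Fin n))

theorem hessianMatrix_eq_toMatrix₂ :
    hessianMatrix u x = LinearMap.toMatrix₂ (EuclideanSpace.basisFun (Fin n) ℝ).toBasis
      (EuclideanSpace.basisFun (Fin n) ℝ).toBasis (fderiv ℝ (fderiv ℝ u) x).toLinearMap₁₂ := by
  ext i j
  simp [hessianMatrix, iteratedFDeriv_two_apply]

theorem fderiv_fderiv_apply_eq_dotProduct_hessianMatrix_mulVec (v w : EuclideanSpace ℝ (Fin n)) :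
    fderiv ℝ (fderiv ℝ u) x v w = v.ofLp ⬝ᵥ (hessianMatrix u x *ᵥ w.ofLp) := by
  rw [hessianMatrix_eq_toMatrix₂]
  exact apply_eq_dotProduct_toMatrix₂_mulVec (EuclideanSpace.basisFun (Fin n) ℝ).toBasis
    (EuclideanSpace.basisFun (Fin n) ℝ).toBasis (fderiv ℝ (fderiv ℝ u) x).toLinearMap₁₂ v w

theorem fderiv_apply_eq_gradVec_dotProduct (w : EuclideanSpace ℝ (Fin n)) :
    fderiv ℝ u x w = gradVec u x ⬝ᵥ w.ofLp := by
  rw [← InnerProductSpace.toDual_symm_apply, EuclideanSpace.inner_eq_star_dotProduct,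
    dotProduct_comm]
  rfl

theorem isHermitian_hessianMatrix (hu : ContDiffAt ℝ 2 u x) : (hessianMatrix u x).IsHermitian := by
  ext i j
  simp only [conjTranspose_apply, star_trivial, hessianMatrix, iteratedFDeriv_two_apply]
  exact (hu.isSymmSndFDerivAt (by simp)) _ _

end Euclidean

theorem hessian_estimate_of_increasing_convexification_general {n : ℕ}
    (Ω : Set (EuclideanSpace ℝ (Fin n))) (hΩo : IsOpen Ω)
    (u : EuclideanSpace ℝ (Fin n) → ℝ) (hu : ContDiffOn ℝ 2 u Ω)
    (I : Set ℝ) (hIsub : u '' Ω ⊆ I)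
    (U : ℝ → ℝ) (hUmono : StrictMonoOn U I)
    (hconv : ConvexOn ℝ Ω (fun x => U (u x))) :
    ∀ x ∈ Ω,
      (1 / 3) * (gradVec u x ⬝ᵥ gradVec u x) *
          (2 * (((hessianMatrix u x).trace • (1 : Matrix (Fin n) (Fin n) ℝ)
                  - hessianMatrix u x) * (hessianMatrix u x * hessianMatrix u x)).trace
            - 2 * S2 (hessianMatrix u x) * (hessianMatrix u x).trace)
        ≤ 2 * ((((hessianMatrix u x).trace • (1 : Matrix (Fin n) (Fin n) ℝ)
                  - hessianMatrix u x) *ᵥ (hessianMatrix u x *ᵥ gradVec u x)) ⬝ᵥ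
                (hessianMatrix u x *ᵥ gradVec u x))
            - 2 * S2 (hessianMatrix u x) *
                ((hessianMatrix u x *ᵥ gradVec u x) ⬝ᵥ gradVec u x) := by
  intro x hx
  have hux : ContDiffAt ℝ 2 u x := hu.contDiffAt (hΩo.mem_nhds hx)
  refine trace_inequality_of_nonneg_on_orthogonal (isHermitian_hessianMatrix u x hux)
    fun v hv => ?_
  have hnonneg := fderiv_fderiv_apply_self_nonneg_of_convexOn_comp (v := WithLp.toLp 2 v)
    (hΩo.mem_nhds hx) hux (mapsTo_iff_image_subset.mpr hIsub) hUmono hconv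
    (by rwa [fderiv_apply_eq_gradVec_dotProduct])
  rwa [fderiv_fderiv_apply_eq_dotProduct_hessianMatrix_mulVec] at hnonneg

/-- If `Ω ⊂ ℝ^n` (`n ≥ 3`) is open convex, `u ∈ C²(Ω)`, and there is a
strictly increasing `C²` function `U` on an open interval `I ⊇ u(Ω)` with `x ↦ U(u(x))`
convex on `Ω`, then for every `x ∈ Ω`, with `H := D²u(x)`, `g := ∇u(x)`, `s := tr H`:
`(1/3)‖g‖²[2 tr((s I − H) H²) − 2 S₂(H) s] ≤ 2⟨(s I − H) H g, H g⟩ − 2 S₂(H)⟨H g, g⟩`. -/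
theorem hessian_estimate_of_increasing_convexification {n : ℕ} (hn : 3 ≤ n)
    (Ω : Set (EuclideanSpace ℝ (Fin n))) (hΩo : IsOpen Ω) (hΩconv : Convex ℝ Ω)
    (u : EuclideanSpace ℝ (Fin n) → ℝ) (hu : ContDiffOn ℝ 2 u Ω)
    (I : Set ℝ) (hIo : IsOpen I) (hIint : I.OrdConnected) (hIsub : u '' Ω ⊆ I)
    (U : ℝ → ℝ) (hU : ContDiffOn ℝ 2 U I) (hUmono : StrictMonoOn U I)
    (hconv : ConvexOn ℝ Ω (fun x => U (u x))) :
    ∀ x ∈ Ω,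
      (1 / 3) * (gradVec u x ⬝ᵥ gradVec u x) *
          (2 * (((hessianMatrix u x).trace • (1 : Matrix (Fin n) (Fin n) ℝ)
                  - hessianMatrix u x) * (hessianMatrix u x * hessianMatrix u x)).trace
            - 2 * S2 (hessianMatrix u x) * (hessianMatrix u x).trace)
        ≤ 2 * ((((hessianMatrix u x).trace • (1 : Matrix (Fin n) (Fin n) ℝ)
                  - hessianMatrix u x) *ᵥ (hessianMatrix u x *ᵥ gradVec u x)) ⬝ᵥ
                (hessianMatrix u x *ᵥ gradVec u x))
            - 2 * S2 (hessianMatrix u x) *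
                ((hessianMatrix u x *ᵥ gradVec u x) ⬝ᵥ gradVec u x) :=
  hessian_estimate_of_increasing_convexification_general Ω hΩo u hu I hIsub U hUmono hconv
end

section
/- Let Ω ⊂ ℝ^N (N ≥ 3) be an open convex set, let u ∈ C²(Ω), and suppose there exists a strictly decreasing function U ∈ C²(I), defined on an open interval I containing u(Ω), such that the composition x ↦ U(u(x)) is convex on Ω. Then for every x ∈ Ω, writing H := D²u(x), g := ∇u(x), and s := tr(H), the reversed inequality holds: (1/3)‖g‖²·[2·tr((s·I − H)·H²) − 2·S₂(H)·s] ≥ 2⟨(s·I − H)·H g, H g⟩ − 2·S₂(H)·⟨H g, g⟩. -/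
open Matrix

/-!
Along each line through `x`, `t ↦ U (u (x + t v))` is convex, so its second derivative at `0`
is nonnegative: `U'' (Du v)² + U' D²u(v, v) ≥ 0`. Since `U' ≤ 0`, either `U' = 0`, in which case
`x` maximizes `u`, `∇u(x) = 0` and both sides vanish; or `D²u ≤ c ∇u ⊗ ∇u` with `c = U'' / (-U')`.
In an eigenbasis of `D²u`, with eigenvalues `λ` and gradient coordinates `d`, the left side minus
the right side is `-2 ∑ₖ dₖ² e₃(λ without λₖ)`. The bound `∑ λᵢ vᵢ² ≤ c (∑ dᵢ vᵢ)²` forces all but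
at most one `λᵢ` to be nonpositive, and testing it on a vector orthogonal to `d` controls the
possible positive eigenvalue enough to make that sum nonpositive.
-/

open Finset Filter Set Topology Unitary

variable {ι : Type*}

/-- `esymm2 l s` and `esymm3 l s` are the elementary symmetric polynomials `e₂`, `e₃` of
`(l i)_{i ∈ s}`, written through power sums by Newton's identities. -/
noncomputable def esymm2 (l : ι → ℝ) (s : Finset ι) : ℝ :=
  ((∑ i ∈ s, l i) ^ 2 - ∑ i ∈ s, l i ^ 2) / 2

noncomputable def esymm3 (l : ι → ℝ) (s : Finset ι) : ℝ :=
  ((∑ i ∈ s, l i) ^ 3 - 3 * (∑ i ∈ s, l i) * ∑ i ∈ s, l i ^ 2 + 2 * ∑ i ∈ s, l i ^ 3) / 6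

section Esymm

variable [DecidableEq ι] (l : ι → ℝ) {s : Finset ι} {j : ι}

theorem esymm2_eq_of_mem (hj : j ∈ s) :
    esymm2 l s = l j * ∑ i ∈ s.erase j, l i + esymm2 l (s.erase j) := by
  unfold esymm2
  rw [← add_sum_erase s l hj, ← add_sum_erase s (l · ^ 2) hj]
  ring

theorem esymm3_eq_of_mem (hj : j ∈ s) :
    esymm3 l s = l j * esymm2 l (s.erase j) + esymm3 l (s.erase j) := by
  unfold esymm3 esymm2
  rw [← add_sum_erase s l hj, ← add_sum_erase s (l · ^ 2) hj, ← add_sum_erase s (l · ^ 3) hj]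
  ring

theorem esymm3_erase_eq (hj : j ∈ s) :
    esymm3 l (s.erase j) = esymm3 l s - esymm2 l s * l j + (∑ i ∈ s, l i) * l j ^ 2 - l j ^ 3 := by
  unfold esymm3 esymm2
  rw [← add_sum_erase s l hj, ← add_sum_erase s (l · ^ 2) hj, ← add_sum_erase s (l · ^ 3) hj]
  ring

variable {l}

theorem esymm2_nonneg (h : ∀ i ∈ s, l i ≤ 0) : 0 ≤ esymm2 l s := by
  induction s using Finset.induction_on with
  | empty => simp [esymm2]
  | @insert a s ha ih =>
    rw [esymm2_eq_of_mem l (mem_insert_self a s), erase_insert ha]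
    have h' : ∀ i ∈ s, l i ≤ 0 := fun i hi ↦ h i (mem_insert_of_mem hi)
    have := mul_nonneg_of_nonpos_of_nonpos (h a (mem_insert_self a s)) (sum_nonpos h')
    linarith [ih h']

theorem esymm3_nonpos (h : ∀ i ∈ s, l i ≤ 0) : esymm3 l s ≤ 0 := by
  induction s using Finset.induction_on with
  | empty => simp [esymm3]
  | @insert a s ha ih =>
    rw [esymm3_eq_of_mem l (mem_insert_self a s), erase_insert ha]
    have h' : ∀ i ∈ s, l i ≤ 0 := fun i hi ↦ h i (mem_insert_of_mem hi)
    have := mul_nonpos_of_nonpos_of_nonneg (h a (mem_insert_self a s)) (esymm2_nonneg h')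
    linarith [ih h']

theorem sq_mul_esymm3_erase_le {a D : ℝ} (h : ∀ i ∈ s, l i ≤ 0) (hj : j ∈ s) (ha : 0 ≤ a)
    (hD : l j = 0 → D = 0) :
    D ^ 2 * (a * esymm2 l (s.erase j) + esymm3 l (s.erase j)) ≤
      a * (D ^ 2 / -l j) * -esymm3 l s := by
  rcases (h j hj).lt_or_eq with hlj | hlj
  · have h3 : esymm3 l (s.erase j) ≤ 0 := esymm3_nonpos fun i hi ↦ h i (mem_of_mem_erase hi)
    obtain ⟨t, hD2⟩ : ∃ t, D ^ 2 = t * -l j := ⟨D ^ 2 / -l j, by field_simp [hlj.ne]⟩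
    have ht : 0 ≤ t := nonneg_of_mul_nonneg_left (hD2 ▸ sq_nonneg D) (by linarith)
    rw [hD2, mul_div_cancel_right₀ t (neg_ne_zero.2 hlj.ne), esymm3_eq_of_mem l hj]
    nlinarith [mul_nonneg (mul_nonneg ht (neg_nonneg.2 h3)) (by linarith : 0 ≤ a - l j)]
  · simp [hD hlj, hlj]

end Esymm

section QuadraticBound

variable [Fintype ι] [DecidableEq ι] {l d : ι → ℝ} {c : ℝ}

theorem le_mul_sq_of_forall_le
    (K : ∀ v : ι → ℝ, ∑ i, l i * v i ^ 2 ≤ c * (∑ i, d i * v i) ^ 2) (i : ι) :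
    l i ≤ c * d i ^ 2 := by
  simpa [Pi.single_apply] using K (Pi.single i 1)

theorem mul_sq_add_mul_sq_nonpos_of_forall_le
    (K : ∀ v : ι → ℝ, ∑ i, l i * v i ^ 2 ≤ c * (∑ i, d i * v i) ^ 2) {i j : ι} (hij : i ≠ j) :
    l i * d j ^ 2 + l j * d i ^ 2 ≤ 0 := by
  have := K (Pi.single i (d j) - Pi.single j (d i))
  rw [Fintype.sum_eq_add i j hij (fun k hk ↦ by simp [hk.1, hk.2]),
    Fintype.sum_eq_add i j hij (fun k hk ↦ by simp [hk.1, hk.2])] at this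
  simpa [hij, hij.symm, mul_comm] using this

theorem ne_zero_of_forall_le_of_pos
    (K : ∀ v : ι → ℝ, ∑ i, l i * v i ^ 2 ≤ c * (∑ i, d i * v i) ^ 2) {i : ι} (hl : 0 < l i) :
    d i ≠ 0 := fun h ↦ by
  have := le_mul_sq_of_forall_le K i
  simp [h] at this
  linarith

theorem mul_sum_div_le_sq_of_forall_le
    (K : ∀ v : ι → ℝ, ∑ i, l i * v i ^ 2 ≤ c * (∑ i, d i * v i) ^ 2) {i₀ : ι} (hl : 0 < l i₀) :
    l i₀ * ∑ j ∈ univ.erase i₀, d j ^ 2 / -l j ≤ d i₀ ^ 2 := by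
  generalize hT_def : ∑ j ∈ univ.erase i₀, d j ^ 2 / -l j = T
  have hd := ne_zero_of_forall_le_of_pos K hl
  rcases le_or_gt T 0 with hT | hT
  · nlinarith [sq_nonneg (d i₀)]
  -- `v` is orthogonal to `d` and makes the form `l i₀ (T / d i₀)² - T` (also when some `l j = 0`,
  -- as then `d j / -l j = 0`)
  set v := Function.update (fun j ↦ d j / -l j) i₀ (-T / d i₀)
  have hv₀ : v i₀ = -T / d i₀ := Function.update_self ..
  have hv : ∀ j ∈ univ.erase i₀, v j = d j / -l j :=
    fun j hj ↦ Function.update_of_ne (ne_of_mem_erase hj) ..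
  have hlin : ∑ i, d i * v i = 0 := by
    rw [← add_sum_erase _ _ (mem_univ i₀), hv₀, ← neg_add_cancel T, ← hT_def]
    congr 1
    · field_simp
    · exact sum_congr rfl fun j hj ↦ by rw [hv j hj]; ring
  have hquad : ∑ i, l i * v i ^ 2 = l i₀ * T ^ 2 / d i₀ ^ 2 - T := by
    rw [← add_sum_erase _ _ (mem_univ i₀), hv₀, sub_eq_add_neg]
    congr 1
    · ring
    rw [← hT_def, ← sum_neg_distrib]
    refine sum_congr rfl fun j hj ↦ ?_
    rw [hv j hj]
    rcases eq_or_ne (l j) 0 with h | h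
    · simp [h]
    · field_simp
  have := K v
  rw [hlin, hquad, sq 0, mul_zero, mul_zero, sub_nonpos, div_le_iff₀ (by positivity)] at this
  nlinarith

theorem sum_sq_mul_esymm3_erase_nonpos
    (K : ∀ v : ι → ℝ, ∑ i, l i * v i ^ 2 ≤ c * (∑ i, d i * v i) ^ 2) :
    ∑ k, d k ^ 2 * esymm3 l (univ.erase k) ≤ 0 := by
  obtain ⟨i₀, hl⟩ | hneg := exists_or_forall_not (0 < l ·)
  swap
  · exact sum_nonpos fun k _ ↦
      mul_nonpos_of_nonneg_of_nonpos (sq_nonneg _) (esymm3_nonpos fun i _ ↦ not_lt.1 (hneg i))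
  have hd : d i₀ ≠ 0 := ne_zero_of_forall_le_of_pos K hl
  have hpair : ∀ j ∈ univ.erase i₀, l i₀ * d j ^ 2 + l j * d i₀ ^ 2 ≤ 0 := fun j hj ↦
    mul_sq_add_mul_sq_nonpos_of_forall_le K (ne_of_mem_erase hj).symm
  have hR : ∀ j ∈ univ.erase i₀, l j ≤ 0 := fun j hj ↦ by
    nlinarith [hpair j hj, sq_nonneg (d j), sq_pos_of_ne_zero hd]
  have hzero : ∀ j ∈ univ.erase i₀, l j = 0 → d j = 0 := fun j hj hlj ↦ by
    have := hpair j hj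
    rw [hlj, zero_mul, add_zero] at this
    exact pow_eq_zero_iff two_ne_zero |>.1 <| le_antisymm
      (nonpos_of_mul_nonpos_right (by linarith) hl) (sq_nonneg _)
  have hterm : ∀ j ∈ univ.erase i₀, d j ^ 2 * esymm3 l (univ.erase j) ≤
      l i₀ * (d j ^ 2 / -l j) * -esymm3 l (univ.erase i₀) := fun j hj ↦ by
    rw [esymm3_eq_of_mem l (mem_erase.2 ⟨(ne_of_mem_erase hj).symm, mem_univ i₀⟩),
      erase_right_comm]
    exact sq_mul_esymm3_erase_le hR hj hl.le (hzero j hj)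
  have hsum := sum_le_sum hterm
  rw [← sum_mul, ← mul_sum] at hsum
  rw [← add_sum_erase _ _ (mem_univ i₀)]
  nlinarith [mul_nonneg (sub_nonneg.2 (mul_sum_div_le_sq_of_forall_le K hl))
    (neg_nonneg.2 (esymm3_nonpos hR))]

end QuadraticBound

section Conjugation

variable [Fintype ι] [DecidableEq ι] (Q : unitary (Matrix ι ι ℝ))

theorem trace_conjStarAlgAut (A : Matrix ι ι ℝ) : (conjStarAlgAut ℝ _ Q A).trace = A.trace := by
  rw [conjStarAlgAut_apply, trace_mul_cycle, coe_star_mul_self, one_mul]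

theorem conjStarAlgAut_mulVec_mulVec (A : Matrix ι ι ℝ) (w : ι → ℝ) :
    conjStarAlgAut ℝ _ Q A *ᵥ ((Q : Matrix ι ι ℝ) *ᵥ w) = (Q : Matrix ι ι ℝ) *ᵥ (A *ᵥ w) := by
  simp [mulVec_mulVec, mul_assoc]

theorem mulVec_dotProduct_mulVec (a b : ι → ℝ) :
    ((Q : Matrix ι ι ℝ) *ᵥ a) ⬝ᵥ ((Q : Matrix ι ι ℝ) *ᵥ b) = a ⬝ᵥ b := by
  rw [dotProduct_mulVec, vecMul_mulVec, ← conjTranspose_eq_transpose_of_trivial,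
    ← star_eq_conjTranspose, star_mul_self_of_mem Q.2, vecMul_one]

end Conjugation

theorem reversed_inequality_diagonal {n : ℕ} (l d : Fin n → ℝ)
    (h : ∑ k, d k ^ 2 * esymm3 l (univ.erase k) ≤ 0) :
    (1 / 3) * (d ⬝ᵥ d) *
        (2 * (((diagonal l).trace • (1 : Matrix (Fin n) (Fin n) ℝ) - diagonal l) *
          (diagonal l * diagonal l)).trace - 2 * S2 (diagonal l) * (diagonal l).trace)
      ≥ 2 * ((((diagonal l).trace • (1 : Matrix (Fin n) (Fin n) ℝ) - diagonal l) *ᵥ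
          (diagonal l *ᵥ d)) ⬝ᵥ (diagonal l *ᵥ d))
        - 2 * S2 (diagonal l) * ((diagonal l *ᵥ d) ⬝ᵥ d) := by
  have hsum : ∑ k, d k ^ 2 * esymm3 l (univ.erase k) = esymm3 l univ * ∑ k, d k ^ 2
      - esymm2 l univ * ∑ k, d k ^ 2 * l k + (∑ i, l i) * ∑ k, d k ^ 2 * l k ^ 2
      - ∑ k, d k ^ 2 * l k ^ 3 := by
    simp only [esymm3_erase_eq l (mem_univ _), mul_sum, ← sum_sub_distrib, ← sum_add_distrib]
    exact sum_congr rfl fun k _ ↦ by ring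
  have hd0 : d ⬝ᵥ d = ∑ k, d k ^ 2 := sum_congr rfl fun k _ ↦ by ring
  have hd1 : (diagonal l *ᵥ d) ⬝ᵥ d = ∑ k, d k ^ 2 * l k :=
    sum_congr rfl fun k _ ↦ by rw [mulVec_diagonal]; ring
  have hd2 : (diagonal l *ᵥ d) ⬝ᵥ (diagonal l *ᵥ d) = ∑ k, d k ^ 2 * l k ^ 2 :=
    sum_congr rfl fun k _ ↦ by rw [mulVec_diagonal]; ring
  have hd3 : (diagonal l *ᵥ (diagonal l *ᵥ d)) ⬝ᵥ (diagonal l *ᵥ d) = ∑ k, d k ^ 2 * l k ^ 3 :=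
    sum_congr rfl fun k _ ↦ by simp only [mulVec_diagonal]; ring
  have hp2 : (diagonal l * diagonal l).trace = ∑ k, l k ^ 2 := by simp [trace_diagonal, sq]
  have hp3 : (diagonal l * (diagonal l * diagonal l)).trace = ∑ k, l k ^ 3 := by
    simp [trace_diagonal, pow_succ, mul_assoc]
  simp only [sub_mul, smul_mul, one_mul, trace_sub, trace_smul, sub_mulVec, smul_mulVec,
    one_mulVec, sub_dotProduct, smul_dotProduct, smul_eq_mul, S2, hd0, hd1, hd2, hd3, hp2, hp3,
    trace_diagonal]
  rw [hsum] at h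
  unfold esymm2 esymm3 at h
  linarith

theorem reversed_inequality_of_forall_le {n : ℕ} {H : Matrix (Fin n) (Fin n) ℝ}
    (hH : H.IsHermitian) (g : Fin n → ℝ) (c : ℝ) (K : ∀ v : Fin n → ℝ, v ⬝ᵥ (H *ᵥ v) ≤ c * (g ⬝ᵥ v) ^ 2) :
    (1 / 3) * (g ⬝ᵥ g) *
        (2 * ((H.trace • (1 : Matrix (Fin n) (Fin n) ℝ) - H) * (H * H)).trace
          - 2 * S2 H * H.trace)
      ≥ 2 * (((H.trace • (1 : Matrix (Fin n) (Fin n) ℝ) - H) *ᵥ (H *ᵥ g)) ⬝ᵥ (H *ᵥ g))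
          - 2 * S2 H * ((H *ᵥ g) ⬝ᵥ g) := by
  set Q := hH.eigenvectorUnitary
  set l := hH.eigenvalues
  have hH' : H = conjStarAlgAut ℝ _ Q (diagonal l) := by simpa using hH.spectral_theorem
  obtain ⟨d, rfl⟩ : ∃ d, (Q : Matrix (Fin n) (Fin n) ℝ) *ᵥ d = g :=
    ⟨star (Q : Matrix (Fin n) (Fin n) ℝ) *ᵥ g, by simp [mulVec_mulVec]⟩
  have K' : ∀ v : Fin n → ℝ, ∑ i, l i * v i ^ 2 ≤ c * (∑ i, d i * v i) ^ 2 := fun v ↦ by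
    have := K (Q *ᵥ v)
    rw [hH', conjStarAlgAut_mulVec_mulVec, mulVec_dotProduct_mulVec,
      mulVec_dotProduct_mulVec] at this
    exact (sum_congr rfl fun i _ ↦ by rw [mulVec_diagonal]; ring).trans_le this
  have hdiag := reversed_inequality_diagonal l d (sum_sq_mul_esymm3_erase_nonpos K')
  have hsub :
      H.trace • 1 - H = conjStarAlgAut ℝ _ Q ((diagonal l).trace • 1 - diagonal l) := by
    rw [map_sub, map_smul, map_one, hH', trace_conjStarAlgAut]
  rw [hsub, hH']
  simpa only [← map_mul, trace_conjStarAlgAut, conjStarAlgAut_mulVec_mulVec,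
    mulVec_dotProduct_mulVec, S2] using hdiag

theorem accPt_principal_of_mem_nhds {X : Type*} [TopologicalSpace X] [PerfectSpace X]
    {s : Set X} {a : X} (hs : s ∈ 𝓝 a) : AccPt a (𝓟 s) := by
  simpa using (PerfectSpace.univ_preperfect a (mem_univ a)).nhds_inter hs

theorem ConvexOn.nonneg_of_hasDerivAt_deriv {φ φ' : ℝ → ℝ} {s : Set ℝ} {a q : ℝ}
    (hφ : ConvexOn ℝ s φ) (hs : s ∈ 𝓝 a) (hφ' : ∀ t ∈ s, HasDerivAt φ (φ' t) t)
    (hq : HasDerivAt φ' q a) : 0 ≤ q :=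
  hq.hasDerivWithinAt.nonneg_of_monotoneOn (accPt_principal_of_mem_nhds hs) <|
    (hφ.monotoneOn_deriv fun t ht ↦ (hφ' t ht).differentiableAt).congr
      fun t ht ↦ (hφ' t ht).deriv

section ConvexCalculus

variable {E : Type*} [NormedAddCommGroup E] [NormedSpace ℝ E]

theorem ConvexOn.nonneg_of_hasFDerivAt_fderiv {f : E → ℝ} {f' : E → E →L[ℝ] ℝ}
    {f'' : E →L[ℝ] E →L[ℝ] ℝ} {Ω : Set E} {x : E} (hf : ConvexOn ℝ Ω f) (hΩ : IsOpen Ω)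
    (hx : x ∈ Ω) (hf' : ∀ y ∈ Ω, HasFDerivAt f (f' y) y) (hf'' : HasFDerivAt f' f'' x) (v : E) :
    0 ≤ f'' v v := by
  set L : ℝ →ᵃ[ℝ] E := AffineMap.lineMap x (x + v)
  have hL : ∀ t, HasDerivAt L v t := fun t ↦ by
    simpa using AffineMap.hasDerivAt_lineMap (a := x) (b := x + v) (x := t)
  have hL0 : L 0 = x := AffineMap.lineMap_apply_zero _ _
  have hs : L ⁻¹' Ω ∈ 𝓝 0 :=
    (hΩ.preimage AffineMap.lineMap_continuous).mem_nhds (by simpa [hL0] using hx)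
  refine (hf.comp_affineMap L).nonneg_of_hasDerivAt_deriv hs
    (fun t ht ↦ (hf' (L t) ht).comp_hasDerivAt t (hL t)) ?_
  have := (hL0 ▸ hf'').comp_hasDerivAt (0 : ℝ) (hL 0)
  simpa using this.clm_apply (hasDerivAt_const 0 v)

theorem ConvexOn.isMinOn_of_hasFDerivAt_eq_zero {f : E → ℝ} {s : Set E} {x : E}
    (hf : ConvexOn ℝ s f) (hx : x ∈ s) (hd : HasFDerivAt f (0 : E →L[ℝ] ℝ) x) :
    IsMinOn f s x := by
  intro y hy
  set L : ℝ →ᵃ[ℝ] E := AffineMap.lineMap x y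
  have hL0 : L 0 = x := AffineMap.lineMap_apply_zero _ _
  have hL1 : L 1 = y := AffineMap.lineMap_apply_one _ _
  have hψ : HasDerivAt (f ∘ L) 0 0 := by
    simpa using
      (hL0 ▸ hd).comp_hasDerivAt (0 : ℝ) (AffineMap.hasDerivAt_lineMap (a := x) (b := y))
  have := (hf.comp_affineMap L).deriv_le_slope (x := 0) (y := 1)
    (by simpa [hL0] using hx) (by simpa [hL1] using hy) one_pos hψ.differentiableAt
  rw [hψ.deriv, slope_def_field] at this
  simpa [hL0, hL1] using this

theorem ConvexOn.secondOrder_comp_nonneg {u : E → ℝ} {U : ℝ → ℝ} {Ω : Set E} {I : Set ℝ}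
    {x : E} (hconv : ConvexOn ℝ Ω (fun y ↦ U (u y))) (hΩ : IsOpen Ω) (hx : x ∈ Ω)
    (hu : ContDiffOn ℝ 2 u Ω) (hI : IsOpen I) (huI : MapsTo u Ω I) (hU : ContDiffOn ℝ 2 U I)
    (v : E) :
    0 ≤ deriv (deriv U) (u x) * fderiv ℝ u x v ^ 2
      + deriv U (u x) * fderiv ℝ (fderiv ℝ u) x v v := by
  have hux : ContDiffAt ℝ 2 u x := hu.contDiffAt (hΩ.mem_nhds hx)
  have hU' : DifferentiableAt ℝ (deriv U) (u x) :=
    ((hU.deriv_of_isOpen hI le_rfl).contDiffAt (hI.mem_nhds (huI hx))).differentiableAt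
      one_ne_zero
  have hf' : ∀ y ∈ Ω, HasFDerivAt (fun y ↦ U (u y)) (deriv U (u y) • fderiv ℝ u y) y :=
    fun y hy ↦
      ((hU.contDiffAt (hI.mem_nhds (huI hy))).differentiableAt two_ne_zero).hasDerivAt
        |>.comp_hasFDerivAt y
          ((hu.contDiffAt (hΩ.mem_nhds hy)).differentiableAt two_ne_zero).hasFDerivAt
  have hf'' :=
    (hU'.hasDerivAt.comp_hasFDerivAt x (hux.differentiableAt two_ne_zero).hasFDerivAt).smul
      ((hux.fderiv_right le_rfl).differentiableAt one_ne_zero).hasFDerivAt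
  have := hconv.nonneg_of_hasFDerivAt_fderiv hΩ hx hf' hf'' v
  simp at this
  linarith

theorem ConvexOn.fderiv_eq_zero_of_deriv_eq_zero {u : E → ℝ} {U : ℝ → ℝ} {Ω : Set E}
    {I : Set ℝ} {x : E} (hconv : ConvexOn ℝ Ω (fun y ↦ U (u y))) (hΩ : IsOpen Ω) (hx : x ∈ Ω)
    (hu : DifferentiableAt ℝ u x) (hU : DifferentiableAt ℝ U (u x)) (hU0 : deriv U (u x) = 0)
    (huI : MapsTo u Ω I) (hUanti : StrictAntiOn U I) : fderiv ℝ u x = 0 := by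
  have hmin : IsMinOn (fun y ↦ U (u y)) Ω x :=
    hconv.isMinOn_of_hasFDerivAt_eq_zero hx <| by
      simpa only [hU0, zero_smul, Function.comp_def] using
        hU.hasDerivAt.comp_hasFDerivAt x hu.hasFDerivAt
  have hmax : IsLocalMax u x := by
    filter_upwards [hΩ.mem_nhds hx] with y hy
    exact (hUanti.le_iff_ge (huI hx) (huI hy)).mp (hmin hy)
  exact hmax.fderiv_eq_zero

end ConvexCalculus

theorem gradVec_dotProduct {n : ℕ} (u : EuclideanSpace ℝ (Fin n) → ℝ)
    (x : EuclideanSpace ℝ (Fin n)) (v : Fin n → ℝ) :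
    gradVec u x ⬝ᵥ v = fderiv ℝ u x (WithLp.toLp 2 v) := by
  rw [← toDual_gradient (𝕜 := ℝ), InnerProductSpace.toDual_apply_apply,
    EuclideanSpace.inner_eq_star_dotProduct, dotProduct_comm]
  rfl

theorem dotProduct_hessianMatrix_mulVec {n : ℕ} (u : EuclideanSpace ℝ (Fin n) → ℝ)
    (x : EuclideanSpace ℝ (Fin n)) (v : Fin n → ℝ) :
    v ⬝ᵥ (hessianMatrix u x *ᵥ v) =
      fderiv ℝ (fderiv ℝ u) x (WithLp.toLp 2 v) (WithLp.toLp 2 v) := by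
  set b := (EuclideanSpace.basisFun (Fin n) ℝ).toBasis
  have hH : hessianMatrix u x =
      LinearMap.toMatrix₂ b b (ContinuousLinearMap.toLinearMap₁₂ (fderiv ℝ (fderiv ℝ u) x)) := by
    ext i j
    simp [b, hessianMatrix, iteratedFDeriv_two_apply, LinearMap.toMatrix₂_apply]
  rw [hH]
  exact (dotProduct_toMatrix₂_mulVec b b
    (ContinuousLinearMap.toLinearMap₁₂ (fderiv ℝ (fderiv ℝ u) x)) v v).trans (by simp [b]; rfl)

theorem hessianMatrix_isHermitian {n : ℕ} {u : EuclideanSpace ℝ (Fin n) → ℝ}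
    {x : EuclideanSpace ℝ (Fin n)} (hu : ContDiffAt ℝ 2 u x) :
    (hessianMatrix u x).IsHermitian := by
  ext i j
  simpa [hessianMatrix, iteratedFDeriv_two_apply] using
    hu.isSymmSndFDerivAt minSmoothness_of_isRCLikeNormedField.le _ _

theorem hessian_estimate_of_decreasing_convexification_general {n : ℕ}
    (Ω : Set (EuclideanSpace ℝ (Fin n))) (hΩo : IsOpen Ω)
    (u : EuclideanSpace ℝ (Fin n) → ℝ) (hu : ContDiffOn ℝ 2 u Ω)
    (I : Set ℝ) (hIo : IsOpen I) (hIsub : u '' Ω ⊆ I)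
    (U : ℝ → ℝ) (hU : ContDiffOn ℝ 2 U I) (hUmono : StrictAntiOn U I)
    (hconv : ConvexOn ℝ Ω (fun x => U (u x))) :
    ∀ x ∈ Ω,
      (1 / 3) * (gradVec u x ⬝ᵥ gradVec u x) *
          (2 * (((hessianMatrix u x).trace • (1 : Matrix (Fin n) (Fin n) ℝ)
                  - hessianMatrix u x) * (hessianMatrix u x * hessianMatrix u x)).trace
            - 2 * S2 (hessianMatrix u x) * (hessianMatrix u x).trace)
        ≥ 2 * ((((hessianMatrix u x).trace • (1 : Matrix (Fin n) (Fin n) ℝ)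
                  - hessianMatrix u x) *ᵥ (hessianMatrix u x *ᵥ gradVec u x)) ⬝ᵥ
                (hessianMatrix u x *ᵥ gradVec u x))
            - 2 * S2 (hessianMatrix u x) *
                ((hessianMatrix u x *ᵥ gradVec u x) ⬝ᵥ gradVec u x) := by
  intro x hx
  have huI : MapsTo u Ω I := mapsTo_iff_image_subset.2 hIsub
  have hux : ContDiffAt ℝ 2 u x := hu.contDiffAt (hΩo.mem_nhds hx)
  have hIx : I ∈ 𝓝 (u x) := hIo.mem_nhds (huI hx)
  have hUx : DifferentiableAt ℝ U (u x) := (hU.contDiffAt hIx).differentiableAt two_ne_zero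
  have hU' : deriv U (u x) ≤ 0 := hUx.hasDerivAt.hasDerivWithinAt.nonpos_of_antitoneOn
    (accPt_principal_of_mem_nhds hIx) hUmono.antitoneOn
  rcases hU'.lt_or_eq with hneg | hzero
  · refine reversed_inequality_of_forall_le (hessianMatrix_isHermitian hux) _
      (deriv (deriv U) (u x) / -deriv U (u x)) fun v ↦ ?_
    rw [dotProduct_hessianMatrix_mulVec, gradVec_dotProduct, div_mul_eq_mul_div,
      le_div_iff₀ (neg_pos.2 hneg)]
    nlinarith [hconv.secondOrder_comp_nonneg hΩo hx hu hIo huI hU (WithLp.toLp 2 v)]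
  · have hDu := hconv.fderiv_eq_zero_of_deriv_eq_zero hΩo hx (hux.differentiableAt two_ne_zero)
      hUx hzero huI hUmono
    have hg : gradVec u x = 0 := funext fun i ↦ by simp [gradVec, gradient, hDu]
    simp [hg]

/-- If `Ω ⊂ ℝ^n` (`n ≥ 3`) is open convex, `u ∈ C²(Ω)`, and there is a
strictly decreasing `C²` function `U` on an open interval `I ⊇ u(Ω)` with `x ↦ U(u(x))`
convex on `Ω`, then for every `x ∈ Ω`, with `H := D²u(x)`, `g := ∇u(x)`, `s := tr H`:
`(1/3)‖g‖²[2 tr((s I − H) H²) − 2 S₂(H) s] ≥ 2⟨(s I − H) H g, H g⟩ − 2 S₂(H)⟨H g, g⟩`. -/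
theorem hessian_estimate_of_decreasing_convexification {n : ℕ} (hn : 3 ≤ n)
    (Ω : Set (EuclideanSpace ℝ (Fin n))) (hΩo : IsOpen Ω) (hΩconv : Convex ℝ Ω)
    (u : EuclideanSpace ℝ (Fin n) → ℝ) (hu : ContDiffOn ℝ 2 u Ω)
    (I : Set ℝ) (hIo : IsOpen I) (hIint : I.OrdConnected) (hIsub : u '' Ω ⊆ I)
    (U : ℝ → ℝ) (hU : ContDiffOn ℝ 2 U I) (hUmono : StrictAntiOn U I)
    (hconv : ConvexOn ℝ Ω (fun x => U (u x))) :
    ∀ x ∈ Ω,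
      (1 / 3) * (gradVec u x ⬝ᵥ gradVec u x) *
          (2 * (((hessianMatrix u x).trace • (1 : Matrix (Fin n) (Fin n) ℝ)
                  - hessianMatrix u x) * (hessianMatrix u x * hessianMatrix u x)).trace
            - 2 * S2 (hessianMatrix u x) * (hessianMatrix u x).trace)
        ≥ 2 * ((((hessianMatrix u x).trace • (1 : Matrix (Fin n) (Fin n) ℝ)
                  - hessianMatrix u x) *ᵥ (hessianMatrix u x *ᵥ gradVec u x)) ⬝ᵥ
                (hessianMatrix u x *ᵥ gradVec u x))
            - 2 * S2 (hessianMatrix u x) *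
                ((hessianMatrix u x *ᵥ gradVec u x) ⬝ᵥ gradVec u x) :=
  hessian_estimate_of_decreasing_convexification_general Ω hΩo u hu I hIo hIsub U hU hUmono hconv
end
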